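/- Let F be a connected generalized Sierpiński carpet and x a cut point of F with a unique representation 𝐢 = i₁i₂⋯. Then for every k ≥ 1, the point x_k = (φ_{i₁}∘⋯∘φ_{i_k})⁻¹(x) is a cut point of F with unique representation i_{k+1}i_{k+2}⋯. -/

import Mathlib

open Set Topology

noncomputable def phi (N : ℕ) (i : ℕ × ℕ) (p : ℝ × ℝ) : ℝ × ℝ :=
  ((p.1 + (i.1 : ℝ)) / (N : ℝ), (p.2 + (i.2 : ℝ)) / (N : ℝ))

noncomputable def phiW (N : ℕ) (l : List (ℕ × ℕ)) : ℝ × ℝ → ℝ × ℝ :=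
  l.foldr (fun i g => phi N i ∘ g) id

def Words (D : Finset (ℕ × ℕ)) (k : ℕ) : Set (List (ℕ × ℕ)) :=
  {l | l.length = k ∧ ∀ a ∈ l, a ∈ D}

def GoodDigits (N : ℕ) (D : Finset (ℕ × ℕ)) : Prop :=
  2 ≤ N ∧ (∀ i ∈ D, i.1 < N ∧ i.2 < N) ∧ 1 < D.card ∧ D.card < N ^ 2

def IsAttractor (N : ℕ) (D : Finset (ℕ × ℕ)) (F : Set (ℝ × ℝ)) : Prop :=
  F.Nonempty ∧ IsCompact F ∧ F = ⋃ i ∈ D, phi N i '' F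

def OmegaW (N : ℕ) (D : Finset (ℕ × ℕ)) (F : Set (ℝ × ℝ)) (x : ℝ × ℝ) (k : ℕ) :
    Set (List (ℕ × ℕ)) :=
  {l | l ∈ Words D k ∧ x ∈ phiW N l '' F}

def Ek (N : ℕ) (D : Finset (ℕ × ℕ)) (F : Set (ℝ × ℝ)) (x : ℝ × ℝ) (k : ℕ) :
    Set (ℝ × ℝ) :=
  ⋃ l ∈ Words D k \ OmegaW N D F x k, phiW N l '' F

def IsRep (N : ℕ) (D : Finset (ℕ × ℕ)) (F : Set (ℝ × ℝ)) (x : ℝ × ℝ)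
    (ii : ℕ → ℕ × ℕ) : Prop :=
  (∀ k, ii k ∈ D) ∧ ∀ k : ℕ, x ∈ phiW N (List.ofFn fun j : Fin k => ii (j : ℕ)) '' F

def SepComp (E A B : Set (ℝ × ℝ)) : Prop :=
  A ⊆ E ∧ B ⊆ E ∧
    ∀ y ∈ A, ∀ z ∈ B, connectedComponentIn E y ≠ connectedComponentIn E z

def WellSep (N : ℕ) (D : Finset (ℕ × ℕ)) (F : Set (ℝ × ℝ)) (x : ℝ × ℝ) (n : ℕ)
    (ω τ : List (ℕ × ℕ)) : Prop :=
  ∀ p : ℕ, 1 ≤ p → SepComp (Ek N D F x (n + p)) (phiW N ω '' F) (phiW N τ '' F)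

lemma phi_cont (N : ℕ) (i : ℕ × ℕ) : Continuous (phi N i) := by
  unfold phi; fun_prop

lemma phi_inj {N : ℕ} (hN : (N:ℝ) ≠ 0) (i : ℕ × ℕ) : Function.Injective (phi N i) := by
  intro p q h
  simp only [phi, Prod.mk.injEq, div_left_inj' hN, add_left_inj] at h
  exact Prod.ext h.1 h.2

lemma phiW_nil (N : ℕ) : phiW N [] = id := rfl

lemma phiW_cons (N : ℕ) (a : ℕ × ℕ) (l : List (ℕ × ℕ)) :
    phiW N (a :: l) = phi N a ∘ phiW N l := rfl

lemma phiW_append (N : ℕ) (l l' : List (ℕ × ℕ)) :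
    phiW N (l ++ l') = phiW N l ∘ phiW N l' := by
  induction l with
  | nil => rfl
  | cons a l ih => simp [phiW_cons, List.cons_append, ih, Function.comp_assoc]

lemma phiW_inj {N : ℕ} (hN : (N:ℝ) ≠ 0) (l : List (ℕ × ℕ)) :
    Function.Injective (phiW N l) := by
  induction l with
  | nil => exact fun a b h => h
  | cons a l ih => exact (phi_inj hN a).comp ih

lemma image_subset_F {N : ℕ} {D : Finset (ℕ × ℕ)} {F : Set (ℝ × ℝ)}
    (hF : IsAttractor N D F) {j : ℕ × ℕ} (hj : j ∈ D) : phi N j '' F ⊆ F := by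
  conv_rhs => rw [hF.2.2]
  exact subset_biUnion_of_mem (u := fun i => phi N i '' F) hj

lemma mem_piece {N : ℕ} {D : Finset (ℕ × ℕ)} {F : Set (ℝ × ℝ)}
    (hF : IsAttractor N D F) {w : ℝ × ℝ} (hw : w ∈ F) :
    ∃ j ∈ D, ∃ v ∈ F, phi N j v = w := by
  rw [hF.2.2] at hw
  simp only [mem_iUnion, mem_image] at hw
  obtain ⟨j, hj, v, hv, hvw⟩ := hw
  exact ⟨j, hj, v, hv, hvw⟩

lemma exists_rep {N : ℕ} {D : Finset (ℕ × ℕ)} {F : Set (ℝ × ℝ)}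
    (hF : IsAttractor N D F) {z : ℝ × ℝ} (hz : z ∈ F) : ∃ jj, IsRep N D F z jj := by
  have key : ∀ w : {p : ℝ × ℝ // p ∈ F}, ∃ j : ℕ × ℕ, j ∈ D ∧
      ∃ v : {p : ℝ × ℝ // p ∈ F}, phi N j v.1 = w.1 := by
    intro ⟨w, hw⟩
    obtain ⟨j, hj, v, hv, hvw⟩ := mem_piece hF hw
    exact ⟨j, hj, ⟨v, hv⟩, hvw⟩
  choose d hd v hv using key
  let p : ℕ → {p : ℝ × ℝ // p ∈ F} := fun n => Nat.rec ⟨z, hz⟩ (fun _ w => v w) n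
  have hp : ∀ n, p (n+1) = v (p n) := fun n => rfl
  refine ⟨fun n => d (p n), fun n => hd _, ?_⟩
  have claim : ∀ k : ℕ, phiW N (List.ofFn fun j : Fin k => d (p (j:ℕ))) (p k).1 = z := by
    intro k
    induction k with
    | zero => rfl
    | succ k ih =>
      rw [List.ofFn_succ']
      have h1 : (List.ofFn fun j : Fin k => d (p ((j.castSucc : Fin (k+1)) : ℕ)))
          = List.ofFn fun j : Fin k => d (p (j:ℕ)) := by
        simp [Fin.coe_castSucc]
      rw [List.concat_eq_append, phiW_append]
      simp only [h1, Function.comp_apply]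
      have h2 : phiW N [d (p (k:ℕ))] (p (k+1)).1 = (p k).1 := by
        show phi N (d (p k)) (v (p k)).1 = (p k).1
        exact hv (p k)
      simp only [Fin.val_last]
      rw [h2]
      exact ih
  exact fun k => ⟨(p k).1, (p k).2, claim k⟩

def consSeq (j : ℕ × ℕ) (jj : ℕ → ℕ × ℕ) : ℕ → ℕ × ℕ
  | 0 => j
  | n+1 => jj n

@[simp] lemma consSeq_zero (j : ℕ × ℕ) (jj : ℕ → ℕ × ℕ) : consSeq j jj 0 = j := rfl
@[simp] lemma consSeq_succ (j : ℕ × ℕ) (jj : ℕ → ℕ × ℕ) (n : ℕ) :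
    consSeq j jj (n+1) = jj n := rfl

lemma isRep_cons {N : ℕ} {D : Finset (ℕ × ℕ)} {F : Set (ℝ × ℝ)}
    (hF : IsAttractor N D F) {j : ℕ × ℕ} (hj : j ∈ D) {z w : ℝ × ℝ} {jj : ℕ → ℕ × ℕ}
    (hjj : IsRep N D F z jj) (hw : phi N j z = w) :
    IsRep N D F w (consSeq j jj) := by
  constructor
  · intro n
    cases n with
    | zero => exact hj
    | succ m => exact hjj.1 m
  · intro k
    cases k with
    | zero =>
      have hzF : z ∈ F := by
        obtain ⟨u, hu, huz⟩ := hjj.2 0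
        exact (show u = z from huz) ▸ hu
      simp only [List.ofFn_zero, phiW_nil, image_id]
      exact hw ▸ image_subset_F hF hj ⟨z, hzF, rfl⟩
    | succ m =>
      rw [List.ofFn_succ]
      have h1 : (List.ofFn fun i : Fin m => consSeq j jj ((i.succ : Fin (m+1)) : ℕ))
          = List.ofFn fun i : Fin m => jj (i : ℕ) := by
        simp [Fin.val_succ, consSeq]
      rw [h1, phiW_cons]
      obtain ⟨u, hu, huz⟩ := hjj.2 m
      exact ⟨u, hu, by simp only [Function.comp_apply, huz, Fin.val_zero, consSeq_zero, hw]⟩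

lemma not_mem_piece {N : ℕ} {D : Finset (ℕ × ℕ)} {F : Set (ℝ × ℝ)}
    (hF : IsAttractor N D F) {x : ℝ × ℝ} {ii : ℕ → ℕ × ℕ}
    (huniq : ∀ jj, IsRep N D F x jj → jj = ii) {j : ℕ × ℕ} (hj : j ∈ D)
    (hne : j ≠ ii 0) : x ∉ phi N j '' F := by
  rintro ⟨z, hz, hzx⟩
  obtain ⟨jj, hjj⟩ := exists_rep hF hz
  have h := huniq (consSeq j jj) (isRep_cons hF hj hjj hzx)
  exact hne (by simpa using congrFun h 0)

lemma two_points {N : ℕ} {D : Finset (ℕ × ℕ)} {F : Set (ℝ × ℝ)}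
    (hN : (N:ℝ) ≠ 0) (hD : 1 < D.card) (hF : IsAttractor N D F) :
    ∃ a ∈ F, ∃ b ∈ F, a ≠ b := by
  obtain ⟨i, hi, j, hj, hij⟩ := Finset.one_lt_card.mp hD
  obtain ⟨z, hz⟩ := hF.1
  refine ⟨phi N i z, image_subset_F hF hi ⟨z, hz, rfl⟩,
    phi N j z, image_subset_F hF hj ⟨z, hz, rfl⟩, ?_⟩
  intro h
  simp only [phi, Prod.mk.injEq, div_left_inj' hN, add_right_inj, Nat.cast_inj] at h
  exact hij (Prod.ext h.1 h.2)

lemma piece_chain {N : ℕ} {D : Finset (ℕ × ℕ)} {F : Set (ℝ × ℝ)}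
    (hF : IsAttractor N D F) (hFconn : IsConnected F) :
    ∀ a ∈ D, ∀ b ∈ D, Relation.ReflTransGen
      (fun p q => p ∈ D ∧ q ∈ D ∧ (phi N p '' F ∩ phi N q '' F).Nonempty) a b := by
  classical
  set T : ℕ × ℕ → Set (ℝ × ℝ) := fun j => phi N j '' F with hT
  set rel : ℕ × ℕ → ℕ × ℕ → Prop := fun p q => p ∈ D ∧ q ∈ D ∧ (T p ∩ T q).Nonempty with hrel
  intro a ha b hb
  set C : Finset (ℕ × ℕ) := D.filter (fun j => Relation.ReflTransGen rel a j) with hC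
  have hCD : C ⊆ D := Finset.filter_subset _ _
  have haC : a ∈ C := Finset.mem_filter.mpr ⟨ha, Relation.ReflTransGen.refl⟩
  set U : Set (ℝ × ℝ) := ⋃ j ∈ C, T j with hU
  set V : Set (ℝ × ℝ) := ⋃ j ∈ (D \ C), T j with hV
  have hTc : ∀ j : ℕ × ℕ, IsCompact (T j) := fun j => hF.2.1.image (phi_cont N j)
  have hUc : IsClosed U := (C.finite_toSet.isCompact_biUnion (fun j _ => hTc j)).isClosed
  have hVc : IsClosed V := ((D \ C).finite_toSet.isCompact_biUnion (fun j _ => hTc j)).isClosed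
  have hcover : F ⊆ U ∪ V := by
    intro z hz
    obtain ⟨j, hj, v, hv, hvz⟩ := mem_piece hF hz
    by_cases hjC : j ∈ C
    · exact Or.inl (mem_biUnion hjC ⟨v, hv, hvz⟩)
    · exact Or.inr (mem_biUnion (Finset.mem_sdiff.mpr ⟨hj, hjC⟩) ⟨v, hv, hvz⟩)
  have hdisj : F ∩ (U ∩ V) = ∅ := by
    ext z
    simp only [mem_inter_iff, mem_empty_iff_false, iff_false]
    rintro ⟨-, hzU, hzV⟩
    rw [hU, mem_iUnion₂] at hzU
    rw [hV, mem_iUnion₂] at hzV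
    obtain ⟨j, hjC, hzj⟩ := hzU
    obtain ⟨j', hj', hzj'⟩ := hzV
    rw [Finset.mem_sdiff] at hj'
    apply hj'.2
    refine Finset.mem_filter.mpr ⟨hj'.1, (Finset.mem_filter.mp hjC).2.trans ?_⟩
    exact Relation.ReflTransGen.single ⟨hCD hjC, hj'.1, z, hzj, hzj'⟩
  have hVF : F ∩ V = ∅ := by
    by_contra hne
    have hVne : (F ∩ V).Nonempty := nonempty_iff_ne_empty.mpr hne
    have hUne : (F ∩ U).Nonempty := by
      obtain ⟨z, hz⟩ := hF.1
      exact ⟨phi N a z, image_subset_F hF ha ⟨z, hz, rfl⟩,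
        mem_biUnion haC ⟨z, hz, rfl⟩⟩
    have := (isPreconnected_closed_iff.mp hFconn.isPreconnected) U V hUc hVc hcover hUne hVne
    rw [hdisj] at this
    exact this.ne_empty rfl
  have hbC : b ∈ C := by
    by_contra hbC
    obtain ⟨z, hz⟩ := hF.1
    have : phi N b z ∈ F ∩ V :=
      ⟨image_subset_F hF hb ⟨z, hz, rfl⟩,
        mem_biUnion (Finset.mem_sdiff.mpr ⟨hb, hbC⟩) ⟨z, hz, rfl⟩⟩
    rw [hVF] at this
    exact this
  exact (Finset.mem_filter.mp hbC).2

lemma cut_step {N : ℕ} {D : Finset (ℕ × ℕ)} {F : Set (ℝ × ℝ)}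
    (hN : (N:ℝ) ≠ 0) (hD : 1 < D.card)
    (hF : IsAttractor N D F) (hFconn : IsConnected F) {x : ℝ × ℝ}
    (hcut : ¬ IsPreconnected (F \ {x})) {i₁ : ℕ × ℕ} (hi₁ : i₁ ∈ D)
    (hnot : ∀ j ∈ D, j ≠ i₁ → x ∉ phi N j '' F)
    {y : ℝ × ℝ} (hy : phi N i₁ y = x) (hyF : y ∈ F) :
    ¬ IsPreconnected (F \ {y}) := by
  classical
  intro h
  set T : ℕ × ℕ → Set (ℝ × ℝ) := fun j => phi N j '' F with hT
  set S : ℕ × ℕ → Set (ℝ × ℝ) := fun j => if j = i₁ then T i₁ \ {x} else T j with hS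
  -- A = T i₁ \ {x} is preconnected
  have hA : T i₁ \ {x} = phi N i₁ '' (F \ {y}) := by
    rw [image_diff (phi_inj hN i₁), image_singleton, hy]
  have hApre : IsPreconnected (T i₁ \ {x}) := by
    rw [hA]; exact h.image _ (phi_cont N i₁).continuousOn
  -- A nonempty
  have hAne : (T i₁ \ {x}).Nonempty := by
    obtain ⟨a, haF, b, hbF, hab⟩ := two_points hN hD hF
    rcases eq_or_ne (phi N i₁ a) x with h1 | h1
    · exact ⟨phi N i₁ b, ⟨b, hbF, rfl⟩, by
        simp only [mem_singleton_iff]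
        intro h2
        exact hab (phi_inj hN i₁ (h1.trans h2.symm))⟩
    · exact ⟨phi N i₁ a, ⟨a, haF, rfl⟩, h1⟩
  -- membership in S
  have hmemS : ∀ j, ∀ z ∈ T j, z ≠ x → z ∈ S j := by
    intro j z hz hzx
    by_cases hj : j = i₁
    · subst hj; simp only [hS, if_pos rfl]; exact ⟨hz, hzx⟩
    · simp only [hS, if_neg hj]; exact hz
  have hSsub : ∀ j ∈ D, S j ⊆ F \ {x} := by
    intro j hj z hz
    by_cases hj1 : j = i₁
    · subst hj1
      simp only [hS, if_pos rfl] at hz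
      exact ⟨image_subset_F hF hj hz.1, hz.2⟩
    · simp only [hS, if_neg hj1] at hz
      exact ⟨image_subset_F hF hj hz, fun hzx => hnot j hj hj1 (hzx ▸ hz)⟩
  -- union equality
  have hunion : ⋃ j ∈ (D : Set (ℕ × ℕ)), S j = F \ {x} := by
    apply Subset.antisymm
    · exact iUnion₂_subset fun j hj => hSsub j hj
    · rintro z ⟨hzF, hzx⟩
      obtain ⟨j, hj, v, hv, hvz⟩ := mem_piece hF hzF
      exact mem_biUnion hj (hmemS j z ⟨v, hv, hvz⟩ hzx)
  -- preconnectedness of pieces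
  have hSpre : ∀ j ∈ (D : Set (ℕ × ℕ)), IsPreconnected (S j) := by
    intro j hj
    by_cases hj1 : j = i₁
    · subst hj1; simpa only [hS, if_pos rfl] using hApre
    · simp only [hS, if_neg hj1]
      exact hFconn.isPreconnected.image _ (phi_cont N j).continuousOn
  -- chain condition
  have hchain : ∀ j, j ∈ (D : Set (ℕ × ℕ)) → ∀ j', j' ∈ (D : Set (ℕ × ℕ)) →
      Relation.ReflTransGen
        (fun p q => (S p ∩ S q).Nonempty ∧ p ∈ (D : Set (ℕ × ℕ))) j j' := by
    intro j hj j' hj'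
    refine Relation.ReflTransGen.mono ?_ j j' (piece_chain hF hFconn j hj j' hj')
    rintro p q ⟨hp, hq, z, hzp, hzq⟩
    refine ⟨?_, hp⟩
    by_cases hpq : p = i₁ ∧ q = i₁
    · obtain ⟨w, hw⟩ := hAne
      exact ⟨w, by simp only [hS, hpq.1, if_pos rfl]; exact hw,
        by simp only [hS, hpq.2, if_pos rfl]; exact hw⟩
    · have hzx : z ≠ x := by
        rcases not_and_or.mp hpq with hne | hne
        · exact fun hzxe => hnot p hp hne (hzxe ▸ hzp)
        · exact fun hzxe => hnot q hq hne (hzxe ▸ hzq)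
      exact ⟨z, hmemS p z hzp hzx, hmemS q z hzq hzx⟩
  have := IsPreconnected.biUnion_of_reflTransGen hSpre hchain
  rw [hunion] at this
  exact hcut this

lemma step_lemma {N : ℕ} {D : Finset (ℕ × ℕ)} {F : Set (ℝ × ℝ)}
    (hN : (N:ℝ) ≠ 0) (hD : 1 < D.card)
    (hF : IsAttractor N D F) (hFconn : IsConnected F) {x : ℝ × ℝ}
    (hcut : ¬ IsPreconnected (F \ {x})) {ii : ℕ → ℕ × ℕ}
    (hrep : IsRep N D F x ii) (huniq : ∀ jj, IsRep N D F x jj → jj = ii)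
    {y : ℝ × ℝ} (hy : phi N (ii 0) y = x) :
    y ∈ F ∧ ¬ IsPreconnected (F \ {y}) ∧
      IsRep N D F y (fun m => ii (m + 1)) ∧
      ∀ jj, IsRep N D F y jj → jj = fun m => ii (m + 1) := by
  have key : ∀ k : ℕ, y ∈ phiW N (List.ofFn fun j : Fin k => ii ((j:ℕ) + 1)) '' F := by
    intro k
    obtain ⟨u, hu, hux⟩ := hrep.2 (k + 1)
    rw [List.ofFn_succ] at hux
    have h1 : (List.ofFn fun i : Fin k => ii ((i.succ : Fin (k+1)) : ℕ))
        = List.ofFn fun i : Fin k => ii ((i:ℕ) + 1) := by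
      simp [Fin.val_succ]
    rw [h1, phiW_cons] at hux
    simp only [Fin.val_zero, Function.comp_apply] at hux
    have : phiW N (List.ofFn fun i : Fin k => ii ((i:ℕ) + 1)) u = y :=
      phi_inj hN (ii 0) (hux.trans hy.symm)
    exact ⟨u, hu, this⟩
  have hyF : y ∈ F := by
    obtain ⟨u, hu, huy⟩ := key 0
    exact (show u = y from huy) ▸ hu
  have hnot : ∀ j ∈ D, j ≠ ii 0 → x ∉ phi N j '' F :=
    fun j hj hne => not_mem_piece hF huniq hj hne
  have hycut : ¬ IsPreconnected (F \ {y}) :=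
    cut_step hN hD hF hFconn hcut (hrep.1 0) hnot hy hyF
  have hyrep : IsRep N D F y (fun m => ii (m + 1)) :=
    ⟨fun m => hrep.1 (m + 1), key⟩
  refine ⟨hyF, hycut, hyrep, ?_⟩
  intro jj hjj
  have h := huniq (consSeq (ii 0) jj) (isRep_cons hF (hrep.1 0) hjj hy)
  funext m
  exact (consSeq_succ (ii 0) jj m) ▸ congrFun h (m + 1)

lemma main_aux {N : ℕ} {D : Finset (ℕ × ℕ)} {F : Set (ℝ × ℝ)}
    (hN : (N:ℝ) ≠ 0) (hD : 1 < D.card)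
    (hF : IsAttractor N D F) (hFconn : IsConnected F) :
    ∀ k : ℕ, ∀ x : ℝ × ℝ, ¬ IsPreconnected (F \ {x}) → ∀ ii : ℕ → ℕ × ℕ,
      IsRep N D F x ii → (∀ jj, IsRep N D F x jj → jj = ii) →
      ∀ y : ℝ × ℝ, phiW N (List.ofFn fun j : Fin k => ii (j : ℕ)) y = x →
      y ∈ F ∧ ¬ IsPreconnected (F \ {y}) ∧
        IsRep N D F y (fun m => ii (m + k)) ∧
        ∀ jj, IsRep N D F y jj → jj = fun m => ii (m + k) := by
  intro k
  induction k with
  | zero =>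
    intro x hcut ii hrep huniq y hy
    have hyx : y = x := hy
    subst hyx
    have hxF : y ∈ F := by
      obtain ⟨u, hu, huy⟩ := hrep.2 0
      exact (show u = y from huy) ▸ hu
    exact ⟨hxF, hcut, hrep, huniq⟩
  | succ k ih =>
    intro x hcut ii hrep huniq y hy
    rw [List.ofFn_succ] at hy
    have h1 : (List.ofFn fun i : Fin k => ii ((i.succ : Fin (k+1)) : ℕ))
        = List.ofFn fun i : Fin k => ii ((i:ℕ) + 1) := by
      simp [Fin.val_succ]
    rw [h1, phiW_cons] at hy
    simp only [Fin.val_zero, Function.comp_apply] at hy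
    obtain ⟨hy1F, hy1cut, hy1rep, hy1uniq⟩ := step_lemma hN hD hF hFconn hcut hrep huniq hy
    obtain ⟨hyF, hycut, hyrep, hyuniq⟩ :=
      ih (phiW N (List.ofFn fun i : Fin k => ii ((i:ℕ) + 1)) y) hy1cut
        (fun m => ii (m + 1)) hy1rep hy1uniq y rfl
    have heq : (fun m => ii (m + 1 + k)) = fun m => ii (m + (k + 1)) := by
      funext m; congr 1; omega
    exact ⟨hyF, hycut, heq ▸ hyrep, fun jj hjj => heq ▸ hyuniq jj hjj⟩

theorem stmt6 (N : ℕ) (D : Finset (ℕ × ℕ)) (hND : GoodDigits N D)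
    (F : Set (ℝ × ℝ)) (hF : IsAttractor N D F) (hFconn : IsConnected F)
    (x : ℝ × ℝ) (hx : x ∈ F) (hcut : ¬ IsPreconnected (F \ {x}))
    (ii : ℕ → ℕ × ℕ) (hrep : IsRep N D F x ii)
    (huniq : ∀ jj, IsRep N D F x jj → jj = ii) :
    ∀ k : ℕ, 1 ≤ k → ∀ y : ℝ × ℝ,
      phiW N (List.ofFn fun j : Fin k => ii (j : ℕ)) y = x →
      y ∈ F ∧ ¬ IsPreconnected (F \ {y}) ∧
        IsRep N D F y (fun m => ii (m + k)) ∧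
        ∀ jj, IsRep N D F y jj → jj = fun m => ii (m + k) := by
  intro k hk y hy
  have hN : (N:ℝ) ≠ 0 := Nat.cast_ne_zero.mpr (by have := hND.1; omega : N ≠ 0)
  exact main_aux hN hND.2.2.1 hF hFconn k x hcut ii hrep huniq y hy
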